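/- arXiv:1603.03201 — 9 statements merged into one kernel-verified Lean document; each statement's English description precedes it below -/
import Mathlib

section
/- Let S be a semiring, R a ring, and f : S → R a finitely additive normalized function. For complemented elements s₁, ..., sₙ of S, the following are equivalent: (1) s₁, ..., sₙ are independent; (2) every family t₁, ..., tₙ with each tᵢ ∈ {sᵢ, sᵢ⊥} is independent; (3) the 2ⁿ equalities f(t₁t₂⋯tₙ) = f(t₁)f(t₂)⋯f(tₙ) with tᵢ ∈ {sᵢ, sᵢ⊥} all hold. -/
/-- Let `S` be a commutative semiring, `R` a commutative ring, and `f : S → R`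
finitely additive and normalized. For complemented elements `s 0, …, s (n-1)` of `S`
(with complements `c i`), the following are equivalent:
(1) `s 0, …, s (n-1)` are independent (i.e. `f (∏_{i∈X} s i) = ∏_{i∈X} f (s i)` for
every nonempty `X ⊆ {0,…,n-1}`);
(2) every family `t` with `t i ∈ {s i, c i}` is independent;
(3) the `2ⁿ` equalities `f (t 0 ⋯ t (n-1)) = f (t 0) ⋯ f (t (n-1))` with
`t i ∈ {s i, c i}` all hold. -/
theorem independent_complemented_tfae
    {S R : Type*} [CommSemiring S] [CommRing R]
    (f : S → R)
    (hf : ∀ a b : S, a * b = 0 → f (a + b) = f a + f b)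
    (hf1 : f 1 = 1)
    (n : ℕ) (s c : Fin n → S)
    (hc : ∀ i, s i * c i = 0 ∧ s i + c i = 1) :
    List.TFAE
      [ (∀ X : Finset (Fin n), X.Nonempty →
          f (∏ i ∈ X, s i) = ∏ i ∈ X, f (s i)),
        (∀ t : Fin n → S, (∀ i, t i = s i ∨ t i = c i) →
          ∀ X : Finset (Fin n), X.Nonempty →
            f (∏ i ∈ X, t i) = ∏ i ∈ X, f (t i)),
        (∀ t : Fin n → S, (∀ i, t i = s i ∨ t i = c i) →
          f (∏ i, t i) = ∏ i, f (t i)) ] := by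
  classical
  have hf0 : f 0 = 0 := by
    have h := hf 0 0 (mul_zero 0)
    rw [add_zero] at h
    exact left_eq_add.mp h
  have hfc : ∀ i, f (s i) + f (c i) = 1 := by
    intro i
    have h := hf (s i) (c i) (hc i).1
    rw [(hc i).2, hf1] at h
    exact h.symm
  -- finite additivity over pairwise-orthogonal families
  have hsum : ∀ (A : Finset (Finset (Fin n))) (g : Finset (Fin n) → S),
      (∀ a ∈ A, ∀ b ∈ A, a ≠ b → g a * g b = 0) →
      f (∑ a ∈ A, g a) = ∑ a ∈ A, f (g a) := by
    intro A
    induction A using Finset.cons_induction with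
    | empty => intro g _; simpa using hf0
    | cons a A ha ih =>
      intro g hg
      have h0 : g a * ∑ b ∈ A, g b = 0 := by
        rw [Finset.mul_sum]
        refine Finset.sum_eq_zero fun b hb => ?_
        exact hg a (Finset.mem_cons_self a A) b (Finset.mem_cons_of_mem hb)
          (by rintro rfl; exact ha hb)
      rw [Finset.sum_cons, hf _ _ h0,
        ih g (fun x hx y hy hxy =>
          hg x (Finset.mem_cons_of_mem hx) y (Finset.mem_cons_of_mem hy) hxy),
        Finset.sum_cons]
  -- key lemma for (1) → (3)
  have key : (∀ X : Finset (Fin n), X.Nonempty →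
        f (∏ i ∈ X, s i) = ∏ i ∈ X, f (s i)) →
      ∀ (B A : Finset (Fin n)), Disjoint A B →
        f ((∏ i ∈ A, s i) * ∏ i ∈ B, c i)
          = (∏ i ∈ A, f (s i)) * ∏ i ∈ B, f (c i) := by
    intro h1 B
    induction B using Finset.cons_induction with
    | empty =>
      intro A _
      simp only [Finset.prod_empty, mul_one]
      rcases A.eq_empty_or_nonempty with rfl | hA
      · simpa using hf1
      · exact h1 A hA
    | cons j B hj ih =>
      intro A hAB
      have hjA : j ∉ A := fun h =>
        Finset.disjoint_left.mp hAB h (Finset.mem_cons_self j B)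
      have hAB' : Disjoint A B :=
        hAB.mono_right (Finset.subset_cons hj)
      have hAjB : Disjoint (insert j A) B := by
        rw [Finset.insert_eq, Finset.disjoint_union_left]
        exact ⟨by simpa using hj, hAB'⟩
      set P := (∏ i ∈ A, s i) * ∏ i ∈ B, c i with hP
      have hsplit : P * s j + P * c j = P := by
        rw [← mul_add, (hc j).2, mul_one]
      have hzero : (P * s j) * (P * c j) = 0 := by
        have h : (P * s j) * (P * c j) = (P * P) * (s j * c j) := by ring
        rw [h, (hc j).1, mul_zero]
      have hadd := hf _ _ hzero
      rw [hsplit] at hadd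
      have e1 : P * s j = (∏ i ∈ insert j A, s i) * ∏ i ∈ B, c i := by
        rw [Finset.prod_insert hjA, hP]; ring
      have ih1 := ih A hAB'
      have ih2 := ih (insert j A) hAjB
      rw [e1, ih2, Finset.prod_insert hjA] at hadd
      have hcj : f (c j) = 1 - f (s j) := by rw [← hfc j]; ring
      have e2 : (∏ i ∈ A, s i) * ∏ i ∈ Finset.cons j B hj, c i = P * c j := by
        rw [Finset.prod_cons, hP]; ring
      rw [e2, Finset.prod_cons, hcj]
      have : f (P * c j) = f P - f (s j) * ((∏ i ∈ A, f (s i)) * ∏ i ∈ B, f (c i)) := by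
        linear_combination -hadd
      rw [this, ih1]; ring
  tfae_have 1 → 3 := by
    intro h1 t ht
    have hA : ∀ i ∈ Finset.univ.filter (fun i => t i = s i), t i = s i :=
      fun i hi => (Finset.mem_filter.mp hi).2
    have hB : ∀ i ∈ Finset.univ.filter (fun i => ¬ t i = s i), t i = c i := by
      intro i hi
      rcases ht i with h | h
      · exact absurd h (Finset.mem_filter.mp hi).2
      · exact h
    have eA : ∏ i ∈ Finset.univ.filter (fun i => t i = s i), t i
        = ∏ i ∈ Finset.univ.filter (fun i => t i = s i), s i :=
      Finset.prod_congr rfl hA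
    have eB : ∏ i ∈ Finset.univ.filter (fun i => ¬ t i = s i), t i
        = ∏ i ∈ Finset.univ.filter (fun i => ¬ t i = s i), c i :=
      Finset.prod_congr rfl hB
    have eA' : ∏ i ∈ Finset.univ.filter (fun i => t i = s i), f (t i)
        = ∏ i ∈ Finset.univ.filter (fun i => t i = s i), f (s i) :=
      Finset.prod_congr rfl fun i hi => by rw [hA i hi]
    have eB' : ∏ i ∈ Finset.univ.filter (fun i => ¬ t i = s i), f (t i)
        = ∏ i ∈ Finset.univ.filter (fun i => ¬ t i = s i), f (c i) :=
      Finset.prod_congr rfl fun i hi => by rw [hB i hi]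
    have hd : Disjoint (Finset.univ.filter (fun i => t i = s i))
        (Finset.univ.filter (fun i => ¬ t i = s i)) :=
      Finset.disjoint_filter_filter_not _ _ _
    calc f (∏ i, t i)
        = f ((∏ i ∈ Finset.univ.filter (fun i => t i = s i), s i) *
            ∏ i ∈ Finset.univ.filter (fun i => ¬ t i = s i), c i) := by
          rw [← Finset.prod_filter_mul_prod_filter_not Finset.univ
            (fun i => t i = s i) t, eA, eB]
      _ = (∏ i ∈ Finset.univ.filter (fun i => t i = s i), f (s i)) *
            ∏ i ∈ Finset.univ.filter (fun i => ¬ t i = s i), f (c i) :=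
          key h1 _ _ hd
      _ = ∏ i, f (t i) := by
          rw [← eA', ← eB', Finset.prod_filter_mul_prod_filter_not]
  tfae_have 3 → 2 := by
    intro h3 t ht X _
    set g : Finset (Fin n) → S :=
      fun Y => (∏ i ∈ X, t i) * ((∏ i ∈ Y, s i) * ∏ i ∈ Xᶜ \ Y, c i) with hg
    have hexp : ∏ i ∈ X, t i = ∑ Y ∈ Xᶜ.powerset, g Y := by
      have h1S : ∏ i ∈ Xᶜ, (s i + c i) = 1 := by
        rw [Finset.prod_congr rfl fun i _ => (hc i).2, Finset.prod_const_one]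
      calc ∏ i ∈ X, t i = (∏ i ∈ X, t i) * ∏ i ∈ Xᶜ, (s i + c i) := by
            rw [h1S, mul_one]
        _ = ∑ Y ∈ Xᶜ.powerset, g Y := by rw [Finset.prod_add, Finset.mul_sum]
    -- each summand is a full product of a mixed family
    have hfg : ∀ Y ∈ Xᶜ.powerset, f (g Y) =
        (∏ i ∈ X, f (t i)) * ((∏ i ∈ Y, f (s i)) * ∏ i ∈ Xᶜ \ Y, f (c i)) := by
      intro Y hY
      have hYc : Y ⊆ Xᶜ := Finset.mem_powerset.mp hY
      set u : Fin n → S :=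
        fun i => if i ∈ X then t i else if i ∈ Y then s i else c i with hu
      have hgY : g Y = ∏ i, u i := by
        rw [← Finset.prod_mul_prod_compl X u,
          ← Finset.prod_sdiff hYc, hg]
        have e1 : ∏ i ∈ X, u i = ∏ i ∈ X, t i :=
          Finset.prod_congr rfl fun i hi => by simp [hu, hi]
        have e2 : ∏ i ∈ Y, u i = ∏ i ∈ Y, s i :=
          Finset.prod_congr rfl fun i hi => by
            have hx : i ∉ X := by simpa using hYc hi
            simp [hu, hx, hi]
        have e3 : ∏ i ∈ Xᶜ \ Y, u i = ∏ i ∈ Xᶜ \ Y, c i :=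
          Finset.prod_congr rfl fun i hi => by
            have h' := Finset.mem_sdiff.mp hi
            have hx : i ∉ X := by simpa using h'.1
            simp [hu, hx, h'.2]
        rw [e1, e2, e3]; ring
      have hu' : ∀ i, u i = s i ∨ u i = c i := by
        intro i
        by_cases hx : i ∈ X
        · simpa [hu, hx] using ht i
        · by_cases hy : i ∈ Y
          · left; simp [hu, hx, hy]
          · right; simp [hu, hx, hy]
      have := h3 u hu'
      rw [hgY, this, ← Finset.prod_mul_prod_compl X (fun i => f (u i)),
        ← Finset.prod_sdiff hYc]
      have e1 : ∏ i ∈ X, f (u i) = ∏ i ∈ X, f (t i) :=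
        Finset.prod_congr rfl fun i hi => by simp [hu, hi]
      have e2 : ∏ i ∈ Y, f (u i) = ∏ i ∈ Y, f (s i) :=
        Finset.prod_congr rfl fun i hi => by
          have hx : i ∉ X := by simpa using hYc hi
          simp [hu, hx, hi]
      have e3 : ∏ i ∈ Xᶜ \ Y, f (u i) = ∏ i ∈ Xᶜ \ Y, f (c i) :=
        Finset.prod_congr rfl fun i hi => by
          have h' := Finset.mem_sdiff.mp hi
          have hx : i ∉ X := by simpa using h'.1
          simp [hu, hx, h'.2]
      rw [e1, e2, e3]; ring
    -- pairwise orthogonality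
    have haux : ∀ Y Z : Finset (Fin n), Y ⊆ Xᶜ → ∀ i, i ∈ Y → i ∉ Z →
        g Y * g Z = 0 := by
      intro Y Z hY i hiY hiZ
      have h1 : s i ∣ g Y :=
        Dvd.dvd.mul_left (Dvd.dvd.mul_right (Finset.dvd_prod_of_mem s hiY) _) _
      have h2 : c i ∣ g Z :=
        Dvd.dvd.mul_left (Dvd.dvd.mul_left
          (Finset.dvd_prod_of_mem c (Finset.mem_sdiff.mpr ⟨hY hiY, hiZ⟩)) _) _
      obtain ⟨k, hk⟩ := mul_dvd_mul h1 h2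
      rw [hk, (hc i).1, zero_mul]
    have hdisj : ∀ Y ∈ Xᶜ.powerset, ∀ Z ∈ Xᶜ.powerset, Y ≠ Z → g Y * g Z = 0 := by
      intro Y hY Z hZ hne
      by_cases hYZ : Y ⊆ Z
      · have hZY : ¬ Z ⊆ Y := fun h => hne (Finset.Subset.antisymm hYZ h)
        obtain ⟨i, hiZ, hiY⟩ := Finset.not_subset.mp hZY
        rw [mul_comm]
        exact haux Z Y (Finset.mem_powerset.mp hZ) i hiZ hiY
      · obtain ⟨i, hiY, hiZ⟩ := Finset.not_subset.mp hYZ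
        exact haux Y Z (Finset.mem_powerset.mp hY) i hiY hiZ
    calc f (∏ i ∈ X, t i) = f (∑ Y ∈ Xᶜ.powerset, g Y) := by rw [hexp]
      _ = ∑ Y ∈ Xᶜ.powerset, f (g Y) := hsum _ g hdisj
      _ = ∑ Y ∈ Xᶜ.powerset,
            (∏ i ∈ X, f (t i)) * ((∏ i ∈ Y, f (s i)) * ∏ i ∈ Xᶜ \ Y, f (c i)) :=
          Finset.sum_congr rfl hfg
      _ = (∏ i ∈ X, f (t i)) * ∏ i ∈ Xᶜ, (f (s i) + f (c i)) := by
          rw [Finset.prod_add, Finset.mul_sum]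
      _ = ∏ i ∈ X, f (t i) := by
          rw [Finset.prod_congr rfl fun i _ => hfc i, Finset.prod_const_one, mul_one]
  tfae_have 2 → 1 := by
    intro h2
    exact h2 s (fun i => Or.inl rfl)
  tfae_finish
end

section
/- Let S be a zerosumfree semiring, G an ordered Abelian group, and f : S → G a non-negative finitely additive function. Then d(s,t) = f(s △ t) defines a G-valued semi-metric on the set of complemented elements of S: d(s,t) ≥ 0, d(s,s) = 0, d(s,t) = d(t,s), and d(s,u) ≤ d(s,t) + d(t,u). Moreover, if f is positive (f(x) = 0 iff x = 0), then d(s,t) = 0 implies s = t. -/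
/-!
Complemented elements behave like a Boolean algebra: they are idempotent, and with `s⊥` the
complement of `s`, the element `s t + s⊥ t⊥` is a complement of `s △ t`. Splitting `x` along a
complemented `e` gives `f x = f (x e) + f (x e⊥)`, so `f` is monotone under multiplication by
complemented elements. For the triangle inequality split `s △ u` along `s △ t`: the part
inside `s △ t` is bounded by `d(s,t)`, and the part outside equals `(t △ u)(s △ u)`, bounded
by `d(t,u)`.
-/

section CommSemiring

variable {S : Type*} [CommSemiring S]

structure IsComplPair (s cs : S) : Prop where
  mul_eq_zero : s * cs = 0
  add_eq_one : s + cs = 1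

namespace IsComplPair

variable {s cs t ct u cu : S}

theorem symm (hs : IsComplPair s cs) : IsComplPair cs s :=
  ⟨by rw [mul_comm, hs.mul_eq_zero], by rw [add_comm, hs.add_eq_one]⟩

theorem mul_self (hs : IsComplPair s cs) : s * s = s := by
  calc s * s = s * s + s * cs := by rw [hs.mul_eq_zero, add_zero]
    _ = s := by rw [← mul_add, hs.add_eq_one, mul_one]

theorem symmDiff (hs : IsComplPair s cs) (ht : IsComplPair t ct) :
    IsComplPair (cs * t + s * ct) (s * t + cs * ct) where
  mul_eq_zero := by
    calc (cs * t + s * ct) * (s * t + cs * ct)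
        = s * cs * (t * t + ct * ct) + t * ct * (cs * cs + s * s) := by ring
      _ = 0 := by rw [hs.mul_eq_zero, ht.mul_eq_zero, zero_mul, zero_mul, add_zero]
  add_eq_one := by
    calc cs * t + s * ct + (s * t + cs * ct) = (s + cs) * (t + ct) := by ring
      _ = 1 := by rw [hs.add_eq_one, ht.add_eq_one, mul_one]

/-- `(s △ u) ∖ (s △ t) = (t △ u) ∩ (s △ u)`. -/
theorem symmDiff_mul_compl_symmDiff (hs : IsComplPair s cs) (hu : IsComplPair u cu) :
    (cs * u + s * cu) * (s * t + cs * ct) = (ct * u + t * cu) * (cs * u + s * cu) := by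
  have lhs : (cs * u + s * cu) * (s * t + cs * ct)
      = cs * cs * ct * u + s * s * t * cu + s * cs * (u * t + cu * ct) := by ring
  have rhs : (ct * u + t * cu) * (cs * u + s * cu)
      = cs * ct * (u * u) + s * t * (cu * cu) + u * cu * (ct * s + t * cs) := by ring
  rw [lhs, rhs, hs.mul_self, hs.symm.mul_self, hu.mul_self, hu.symm.mul_self,
    hs.mul_eq_zero, hu.mul_eq_zero, zero_mul, zero_mul, add_zero]

theorem eq_of_symmDiff_eq_zero (hzs : ∀ a b : S, a + b = 0 → a = 0 ∧ b = 0)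
    (hs : IsComplPair s cs) (ht : IsComplPair t ct) (h : cs * t + s * ct = 0) : s = t := by
  obtain ⟨hcst, hsct⟩ := hzs _ _ h
  calc s = s * (t + ct) := by rw [ht.add_eq_one, mul_one]
    _ = t * (s + cs) := by rw [mul_add, mul_add, hsct, mul_comm t cs, hcst, mul_comm]
    _ = t := by rw [hs.add_eq_one, mul_one]

end IsComplPair

variable {G : Type*} {f : S → G}

theorem map_zero_of_map_add [AddLeftCancelMonoid G]
    (hf : ∀ a b : S, a * b = 0 → f (a + b) = f a + f b) : f 0 = 0 := by
  simpa using hf 0 0 (mul_zero 0)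

theorem map_eq_map_mul_add_map_mul [Add G] (hf : ∀ a b : S, a * b = 0 → f (a + b) = f a + f b)
    {e ce : S} (he : IsComplPair e ce) (x : S) : f x = f (x * e) + f (x * ce) := by
  have horth : x * e * (x * ce) = 0 := by
    rw [mul_mul_mul_comm, he.mul_eq_zero, mul_zero]
  rw [← hf _ _ horth, ← mul_add, he.add_eq_one, mul_one]

theorem map_mul_le [AddCommMonoid G] [PartialOrder G] [IsOrderedAddMonoid G]
    (hnonneg : ∀ x : S, 0 ≤ f x)
    (hf : ∀ a b : S, a * b = 0 → f (a + b) = f a + f b)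
    {e ce : S} (he : IsComplPair e ce) (x : S) : f (x * e) ≤ f x := by
  rw [map_eq_map_mul_add_map_mul hf he x]
  exact le_add_of_nonneg_right (hnonneg _)

theorem map_symmDiff_le_add [AddCommMonoid G] [PartialOrder G] [IsOrderedAddMonoid G]
    (hnonneg : ∀ x : S, 0 ≤ f x)
    (hf : ∀ a b : S, a * b = 0 → f (a + b) = f a + f b) {s cs t ct u cu : S}
    (hs : IsComplPair s cs) (ht : IsComplPair t ct) (hu : IsComplPair u cu) :
    f (cs * u + s * cu) ≤ f (cs * t + s * ct) + f (ct * u + t * cu) := by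
  rw [map_eq_map_mul_add_map_mul hf (hs.symmDiff ht), mul_comm (cs * u + s * cu),
    hs.symmDiff_mul_compl_symmDiff hu]
  exact add_le_add (map_mul_le hnonneg hf (hs.symmDiff hu) _)
    (map_mul_le hnonneg hf (hs.symmDiff hu) _)

end CommSemiring

/-- Let `S` be a zerosumfree commutative semiring, `G` an ordered Abelian group, and
`f : S → G` non-negative and finitely additive. Then `d(s,t) = f (s △ t)`
(where `s △ t = s⊥ t + s t⊥` for complemented `s, t`) is a `G`-semi-metric on the
complemented elements: non-negative, zero on the diagonal, symmetric, and satisfying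
the triangle inequality. Moreover, if `f` is positive then `d(s,t) = 0` implies `s = t`. -/
theorem finitelyAdditive_symmDiff_semimetric
    {S G : Type*} [CommSemiring S] [AddCommGroup G] [PartialOrder G] [IsOrderedAddMonoid G]
    (hzs : ∀ a b : S, a + b = 0 → a = 0 ∧ b = 0)
    (f : S → G)
    (hnonneg : ∀ x : S, 0 ≤ f x)
    (hf : ∀ a b : S, a * b = 0 → f (a + b) = f a + f b) :
    ∀ s t u cs ct cu : S,
      s * cs = 0 → s + cs = 1 →
      t * ct = 0 → t + ct = 1 →
      u * cu = 0 → u + cu = 1 →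
      (0 ≤ f (cs * t + s * ct)) ∧
      (f (cs * s + s * cs) = 0) ∧
      (f (cs * t + s * ct) = f (ct * s + t * cs)) ∧
      (f (cs * u + s * cu) ≤ f (cs * t + s * ct) + f (ct * u + t * cu)) ∧
      ((∀ x : S, f x = 0 → x = 0) → f (cs * t + s * ct) = 0 → s = t) := by
  intro s t u cs ct cu hs₀ hs₁ ht₀ ht₁ hu₀ hu₁
  have hs : IsComplPair s cs := ⟨hs₀, hs₁⟩
  have ht : IsComplPair t ct := ⟨ht₀, ht₁⟩
  refine ⟨hnonneg _, ?_, by rw [add_comm, mul_comm cs, mul_comm s], ?_, ?_⟩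
  · rw [mul_comm cs, hs₀, add_zero, map_zero_of_map_add hf]
  · exact map_symmDiff_le_add hnonneg hf hs ht ⟨hu₀, hu₁⟩
  · intro hpos hd
    exact hs.eq_of_symmDiff_eq_zero hzs ht (hpos _ hd)
end

section
/- Let S be a zerosumfree semiring in which s, t complemented implies s + t complemented, T an ordered ring, and p : S → T a probability function. If s and t are complemented elements of S, then p(st) ≥ p(s) + p(t) − 1. -/
/-!
Additivity over a complemented element `u` gives `p x = p (xu) + p (xu⊥)` for every `x`.
Hence `p s + p s⊥ = 1`, `p t = p (st) + p (s⊥t)` and `p s⊥ = p (s⊥t) + p (s⊥t⊥)`, so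
`p s + p t - 1 = p t - p s⊥ = p (st) - p (s⊥t⊥) ≤ p (st)`.
-/

theorem apply_eq_apply_mul_add_apply_mul_of_compl {S T : Type*} [CommSemiring S] [Add T]
    (p : S → T) (hadd : ∀ a b : S, a * b = 0 → p (a + b) = p a + p b)
    {u cu : S} (hmul : u * cu = 0) (hsum : u + cu = 1) (x : S) :
    p x = p (x * u) + p (x * cu) := by
  have hdisj : x * u * (x * cu) = 0 := by
    rw [mul_mul_mul_comm, hmul, mul_zero]
  rw [← hadd _ _ hdisj, ← mul_add, hsum, mul_one]

theorem probability_mul_ge_general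
    {S T : Type*} [CommSemiring S] [CommRing T] [PartialOrder T] [IsOrderedRing T]
    (p : S → T)
    (hnonneg : ∀ s : S, 0 ≤ p s)
    (hone : p 1 = 1)
    (hadd : ∀ a b : S, a * b = 0 → p (a + b) = p a + p b)
    (s t : S)
    (hs : ∃ cs, s * cs = 0 ∧ s + cs = 1)
    (ht : ∃ ct, t * ct = 0 ∧ t + ct = 1) :
    p s + p t - 1 ≤ p (s * t) := by
  obtain ⟨cs, hcs0, hcs1⟩ := hs
  obtain ⟨ct, hct0, hct1⟩ := ht
  have split_cs := apply_eq_apply_mul_add_apply_mul_of_compl p hadd hct0 hct1 cs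
  have split_t := apply_eq_apply_mul_add_apply_mul_of_compl p hadd hcs0 hcs1 t
  have split_one := apply_eq_apply_mul_add_apply_mul_of_compl p hadd hcs0 hcs1 1
  rw [one_mul, one_mul, hone] at split_one
  rw [mul_comm t s, mul_comm t cs] at split_t
  calc p s + p t - 1 = p (s * t) - p (cs * ct) := by
        linear_combination split_t - split_one - split_cs
    _ ≤ p (s * t) := sub_le_self _ (hnonneg (cs * ct))

/-- Let `S` be a zerosumfree commutative semiring in which the sum of two complemented
elements is complemented, `T` an ordered commutative ring, and `p : S → T` a probability
function. If `s` and `t` are complemented, then `p (st) ≥ p s + p t - 1`. -/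
theorem probability_mul_ge
    {S T : Type*} [CommSemiring S] [CommRing T] [PartialOrder T] [IsOrderedRing T]
    (hzs : ∀ a b : S, a + b = 0 → a = 0 ∧ b = 0)
    (hsum : ∀ a b : S, (∃ ca, a * ca = 0 ∧ a + ca = 1) → (∃ cb, b * cb = 0 ∧ b + cb = 1) →
      ∃ c, (a + b) * c = 0 ∧ (a + b) + c = 1)
    (p : S → T)
    (hnonneg : ∀ s : S, 0 ≤ p s)
    (hone : p 1 = 1)
    (hadd : ∀ a b : S, a * b = 0 → p (a + b) = p a + p b)
    (s t : S)
    (hs : ∃ cs, s * cs = 0 ∧ s + cs = 1)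
    (ht : ∃ ct, t * ct = 0 ∧ t + ct = 1) :
    p s + p t - 1 ≤ p (s * t) :=
  probability_mul_ge_general p hnonneg hone hadd s t hs ht
end

section
/- Let S be a zerosumfree semiring. The following are equivalent: (1) the sum of any two complemented elements is complemented; (2) 1 + 1 is complemented; (3) for complemented s, t one has s + t = s + s⊥t; (4) the set of complemented elements with operations + and · forms a Boolean algebra. -/
/-- `Complemented s` means `s` has a complement: `s*c = 0` and `s+c = 1`. -/
def IsComplementedElem {S : Type*} [CommSemiring S] (s : S) : Prop :=
  ∃ c : S, s * c = 0 ∧ s + c = 1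

namespace ZSFAux

variable {S : Type*} [CommSemiring S]

lemma one_comp : IsComplementedElem (1 : S) := ⟨0, by simp⟩

lemma zero_comp : IsComplementedElem (0 : S) := ⟨1, by simp⟩

lemma comp_idem {a : S} (ha : IsComplementedElem a) : a * a = a := by
  obtain ⟨d, hd0, hd1⟩ := ha
  calc a * a = a * a + a * d := by rw [hd0, add_zero]
    _ = a * (a + d) := by ring
    _ = a := by rw [hd1, mul_one]

section OneAddOne

variable (h1 : (1 : S) + 1 = 1)
include h1

lemma add_idem (a : S) : a + a = a := by
  have : a * (1 + 1) = a * 1 := by rw [h1]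
  simpa [mul_add] using this

lemma one_add {t : S} (ht : IsComplementedElem t) : 1 + t = 1 := by
  obtain ⟨c, _, hc1⟩ := ht
  calc (1 : S) + t = (t + c) + t := by rw [hc1]
    _ = (t + t) + c := by ring
    _ = t + c := by rw [add_idem h1]
    _ = 1 := hc1

lemma absorb {t : S} (ht : IsComplementedElem t) (x : S) : x + x * t = x := by
  calc x + x * t = x * (1 + t) := by ring
    _ = x := by rw [one_add h1 ht, mul_one]

lemma comp_add {s t : S} (hs : IsComplementedElem s) (ht : IsComplementedElem t) :
    IsComplementedElem (s + t) := by
  obtain ⟨cs, hs0, hs1⟩ := hs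
  obtain ⟨ct, ht0, ht1⟩ := ht
  have hcs : IsComplementedElem cs := ⟨s, by rw [mul_comm]; exact hs0, by rw [add_comm]; exact hs1⟩
  have hct : IsComplementedElem ct := ⟨t, by rw [mul_comm]; exact ht0, by rw [add_comm]; exact ht1⟩
  refine ⟨cs * ct, ?_, ?_⟩
  · calc (s + t) * (cs * ct) = (s * cs) * ct + (t * ct) * cs := by ring
      _ = 0 := by rw [hs0, ht0]; ring
  · have e1 : s + s * t + s * ct = s := by
      rw [show s + s * t + s * ct = (s + s * t) + s * ct from rfl,
        absorb h1 ⟨ct, ht0, ht1⟩ s, absorb h1 hct s]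
    have e2 : t + t * cs = t := absorb h1 hcs t
    calc s + t + cs * ct
        = (s + s * t + s * ct) + (t + t * cs) + cs * ct := by rw [e1, e2]
      _ = (s + cs) * (t + ct) + (s + t) := by ring
      _ = 1 + s + t := by rw [hs1, ht1]; ring
      _ = 1 + t := by rw [one_add h1 ⟨cs, hs0, hs1⟩]
      _ = 1 := one_add h1 ⟨ct, ht0, ht1⟩

lemma comp_mul {s t : S} (hs : IsComplementedElem s) (ht : IsComplementedElem t) :
    IsComplementedElem (s * t) := by
  obtain ⟨cs, hs0, hs1⟩ := hs
  obtain ⟨ct, ht0, ht1⟩ := ht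
  have hcs : IsComplementedElem cs := ⟨s, by rw [mul_comm]; exact hs0, by rw [add_comm]; exact hs1⟩
  have hct : IsComplementedElem ct := ⟨t, by rw [mul_comm]; exact ht0, by rw [add_comm]; exact ht1⟩
  refine ⟨cs + ct, ?_, ?_⟩
  · calc (s * t) * (cs + ct) = (s * cs) * t + (t * ct) * s := by ring
      _ = 0 := by rw [hs0, ht0]; ring
  · have e1 : cs + cs * t + cs * ct = cs := by
      rw [show cs + cs * t + cs * ct = (cs + cs * t) + cs * ct from rfl,
        absorb h1 ⟨ct, ht0, ht1⟩ cs, absorb h1 hct cs]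
    have e2 : ct + ct * s = ct := absorb h1 ⟨cs, hs0, hs1⟩ ct
    calc s * t + (cs + ct)
        = s * t + (cs + cs * t + cs * ct) + (ct + ct * s) := by rw [e1, e2]; ring
      _ = (s + cs) * (t + ct) + (cs + ct) := by ring
      _ = 1 + cs + ct := by rw [hs1, ht1]; ring
      _ = 1 + ct := by rw [one_add h1 hcs]
      _ = 1 := one_add h1 hct

/-- The Boolean algebra on complemented elements, assuming `1 + 1 = 1`. -/
noncomputable def compBA : BooleanAlgebra {s : S // IsComplementedElem s} where
  sup a b := ⟨(a : S) + b, comp_add h1 a.2 b.2⟩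
  inf a b := ⟨(a : S) * b, comp_mul h1 a.2 b.2⟩
  le a b := (a : S) + b = b
  le_refl a := add_idem h1 a
  le_trans a b c hab hbc := by
    show (a : S) + c = c
    calc (a : S) + c = (a : S) + ((b : S) + c) := by rw [hbc]
      _ = ((a : S) + b) + c := by ring
      _ = (b : S) + c := by rw [hab]
      _ = c := hbc
  le_antisymm a b hab hba := by
    apply Subtype.ext
    calc (a : S) = (b : S) + a := hba.symm
      _ = (a : S) + b := by ring
      _ = b := hab
  le_sup_left a b := by
    show (a : S) + ((a : S) + b) = (a : S) + b
    calc (a : S) + ((a : S) + b) = ((a : S) + a) + b := by ring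
      _ = (a : S) + b := by rw [add_idem h1]
  le_sup_right a b := by
    show (b : S) + ((a : S) + b) = (a : S) + b
    calc (b : S) + ((a : S) + b) = (a : S) + ((b : S) + b) := by ring
      _ = (a : S) + b := by rw [add_idem h1]
  sup_le a b c hac hbc := by
    show ((a : S) + b) + c = c
    calc ((a : S) + b) + c = (a : S) + ((b : S) + c) := by ring
      _ = (a : S) + c := by rw [hbc]
      _ = c := hac
  inf_le_left a b := by
    show (a : S) * b + a = a
    calc (a : S) * b + a = (a : S) + a * b := by ring
      _ = a := absorb h1 b.2 a
  inf_le_right a b := by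
    show (a : S) * b + b = b
    calc (a : S) * b + b = (b : S) + b * a := by ring
      _ = b := absorb h1 a.2 b
  le_inf c a b hca hcb := by
    show (c : S) + (a : S) * b = (a : S) * b
    have h2 : (c : S) * (c : S) = c := comp_idem c.2
    have m1 : (c : S) * b + (a : S) * b = (a : S) * b := by
      rw [show (c : S) * b + (a : S) * b = ((c : S) + a) * b from by ring, hca]
    have m2 : (c : S) + (c : S) * b = (c : S) * b := by
      calc (c : S) + (c : S) * b = (c : S) * c + (c : S) * b := by rw [h2]
        _ = (c : S) * ((c : S) + b) := by ring
        _ = (c : S) * b := by rw [hcb]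
    calc (c : S) + (a : S) * b = (c : S) + ((c : S) * b + (a : S) * b) := by rw [m1]
      _ = ((c : S) + (c : S) * b) + (a : S) * b := by ring
      _ = (c : S) * b + (a : S) * b := by rw [m2]
      _ = (a : S) * b := m1
  le_sup_inf a b c := by
    show ((a : S) + b) * ((a : S) + c) + ((a : S) + (b : S) * c) = (a : S) + (b : S) * c
    have key : ((a : S) + b) * ((a : S) + c) = (a : S) + (b : S) * c := by
      calc ((a : S) + b) * ((a : S) + c)
          = (a : S) * a + (a : S) * c + (a : S) * b + (b : S) * c := by ring
        _ = (((a : S) + (a : S) * c) + (a : S) * b) + (b : S) * c := by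
            rw [comp_idem a.2]
        _ = (a : S) + (b : S) * c := by rw [absorb h1 c.2 a, absorb h1 b.2 a]
    rw [key, add_idem h1]
  compl a := ⟨Classical.choose a.2, a, (mul_comm _ _).trans (Classical.choose_spec a.2).1,
    (add_comm _ _).trans (Classical.choose_spec a.2).2⟩
  top := ⟨1, one_comp⟩
  bot := ⟨0, zero_comp⟩
  le_top a := by show (a : S) + 1 = 1; rw [add_comm]; exact one_add h1 a.2
  bot_le a := by show (0 : S) + a = a; rw [zero_add]
  inf_compl_le_bot a := by
    show (a : S) * Classical.choose a.2 + 0 = 0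
    rw [(Classical.choose_spec a.2).1, add_zero]
  top_le_sup_compl a := by
    show (1 : S) + ((a : S) + Classical.choose a.2) = (a : S) + Classical.choose a.2
    rw [(Classical.choose_spec a.2).2, add_idem h1]

end OneAddOne

end ZSFAux

/-- Let `S` be a zerosumfree commutative semiring. TFAE:
(1) the sum of two complemented elements is complemented;
(2) `1 + 1` is complemented;
(3) `s + t = s + s⊥ t` for complemented `s, t` (where `s⊥` is the complement of `s`);
(4) the set of complemented elements, equipped with `+` as join and `·` as meet,
forms a Boolean algebra. -/
theorem zerosumfree_complemented_tfae
    {S : Type*} [CommSemiring S]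
    (hzs : ∀ a b : S, a + b = 0 → a = 0 ∧ b = 0) :
    List.TFAE
      [ (∀ s t : S, IsComplementedElem s → IsComplementedElem t →
          IsComplementedElem (s + t)),
        IsComplementedElem ((1 : S) + 1),
        (∀ s t cs : S, s * cs = 0 → s + cs = 1 → IsComplementedElem t →
          s + t = s + cs * t),
        (∃ inst : BooleanAlgebra {s : S // IsComplementedElem s},
          (∀ a b : {s : S // IsComplementedElem s},
            ((inst.sup a b : {s : S // IsComplementedElem s}) : S) = (a : S) + (b : S)) ∧
          (∀ a b : {s : S // IsComplementedElem s},
            ((inst.inf a b : {s : S // IsComplementedElem s}) : S) = (a : S) * (b : S))) ] := by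
  have key2 : IsComplementedElem ((1 : S) + 1) → (1 : S) + 1 = 1 := by
    rintro ⟨d, hd0, hd1⟩
    have : d + d = 0 := by rw [← hd0]; ring
    have hd : d = 0 := (hzs d d this).1
    rw [hd, add_zero] at hd1
    exact hd1
  tfae_have 1 → 2 := fun h => h 1 1 ZSFAux.one_comp ZSFAux.one_comp
  tfae_have 2 → 3 := by
    intro h2 s t cs hcs0 hcs1 ht
    have h1 := key2 h2
    calc s + t = s + (s + cs) * t := by rw [hcs1, one_mul]
      _ = (s + s * t) + cs * t := by ring
      _ = s + cs * t := by rw [ZSFAux.absorb h1 ht s]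
  tfae_have 3 → 1 := by
    intro h3 s t hs ht
    obtain ⟨cs, hcs0, hcs1⟩ := hs
    obtain ⟨ct, hct0, hct1⟩ := ht
    rw [h3 s t cs hcs0 hcs1 ⟨ct, hct0, hct1⟩]
    refine ⟨cs * ct, ?_, ?_⟩
    · calc (s + cs * t) * (cs * ct) = (s * cs) * ct + (cs * cs) * (t * ct) := by ring
        _ = 0 := by rw [hcs0, hct0]; ring
    · calc s + cs * t + cs * ct = s + cs * (t + ct) := by ring
        _ = s + cs := by rw [hct1, mul_one]
        _ = 1 := hcs1
  tfae_have 2 → 4 := by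
    intro h2
    exact ⟨ZSFAux.compBA (key2 h2), fun a b => rfl, fun a b => rfl⟩
  tfae_have 4 → 2 := by
    rintro ⟨inst, hsup, _⟩
    have h := (inst.sup ⟨1, ZSFAux.one_comp⟩ ⟨1, ZSFAux.one_comp⟩).2
    rwa [hsup] at h
  tfae_finish
end

section
/- (Equality of Parallel Systems) Let S be a zerosumfree semiring with 1 + 1 complemented, T a ring, and f : S → T finitely additive and normalized. If s₁, ..., sₙ ∈ S are complemented and independent with respect to f, then f(s₁ + ⋯ + sₙ) = 1 − ∏ᵢ(1 − f(sᵢ)). -/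
/-- (Equality of Parallel Systems) Let `S` be a zerosumfree commutative semiring in which
`1 + 1` is complemented, `T` a commutative ring, and `f : S → T` finitely additive and
normalized. If `s 0, …, s (n-1)` are complemented and independent with respect to `f`,
then `f (s 0 + ⋯ + s (n-1)) = 1 - ∏ᵢ (1 - f (s i))`. -/
theorem equality_of_parallel_systems
    {S T : Type*} [CommSemiring S] [CommRing T]
    (hzs : ∀ a b : S, a + b = 0 → a = 0 ∧ b = 0)
    (h2 : ∃ c : S, (1 + 1) * c = 0 ∧ (1 + 1) + c = 1)
    (f : S → T)
    (hf : ∀ a b : S, a * b = 0 → f (a + b) = f a + f b)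
    (hf1 : f 1 = 1)
    (n : ℕ) (s : Fin n → S)
    (hc : ∀ i, ∃ c, s i * c = 0 ∧ s i + c = 1)
    (hind : ∀ X : Finset (Fin n), X.Nonempty →
      f (∏ i ∈ X, s i) = ∏ i ∈ X, f (s i)) :
    f (∑ i, s i) = 1 - ∏ i, (1 - f (s i)) := by
  classical
  -- Step 1: 1 + 1 = 1 in S.
  obtain ⟨c2, hc2m, hc2a⟩ := h2
  have hc20 : c2 = 0 := by
    have h : c2 + c2 = 0 := by
      have : (1 + 1) * c2 = c2 + c2 := by ring
      rw [← this]; exact hc2m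
    exact (hzs c2 c2 h).1
  have hone : (1 : S) + 1 = 1 := by
    have := hc2a; rw [hc20, add_zero] at this; exact this
  have hidem : ∀ x : S, x + x = x := by
    intro x
    calc x + x = x * (1 + 1) := by ring
    _ = x := by rw [hone, mul_one]
  -- Choose complements.
  choose c hcm hca using hc
  -- Step 2: for any X, (∑ i ∈ X, s i) + ∏ i ∈ X, c i = 1.
  have hA : ∀ X : Finset (Fin n), (∑ i ∈ X, s i) + ∏ i ∈ X, c i = 1 := by
    intro X
    induction X using Finset.induction with
    | empty => simp
    | @insert j X hj ih =>
      rw [Finset.sum_insert hj, Finset.prod_insert hj]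
      set t := ∑ i ∈ X, s i with ht
      set d := ∏ i ∈ X, c i with hd
      have key : t + s j + c j * d = t * s j + t * c j + s j * t + s j * d + c j * d := by
        have h1 : t = t * (s j + c j) := by rw [hca j, mul_one]
        have h2 : s j = s j * (t + d) := by rw [ih, mul_one]
        calc t + s j + c j * d = t * (s j + c j) + s j * (t + d) + c j * d := by
              rw [← h1, ← h2]
        _ = t * s j + t * c j + s j * t + s j * d + c j * d := by ring
      have key2 : t * s j + t * c j + s j * t + s j * d + c j * d
          = t * s j + t * c j + s j * d + c j * d := by
        have : t * s j + s j * t = t * s j := by rw [mul_comm (s j) t]; exact hidem _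
        calc t * s j + t * c j + s j * t + s j * d + c j * d
            = (t * s j + s j * t) + t * c j + s j * d + c j * d := by ring
        _ = t * s j + t * c j + s j * d + c j * d := by rw [this]
      have key3 : t * s j + t * c j + s j * d + c j * d = (t + d) * (s j + c j) := by ring
      rw [show s j + t + c j * d = t + s j + c j * d by ring, key, key2, key3, ih,
        hca j, one_mul]
  -- Step 3: factorization lemma.
  have hB : ∀ X : Finset (Fin n), ∀ Y : Finset (Fin n), Disjoint X Y →
      f ((∏ i ∈ X, c i) * ∏ i ∈ Y, s i)
        = (∏ i ∈ X, (1 - f (s i))) * ∏ i ∈ Y, f (s i) := by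
    intro X
    induction X using Finset.induction with
    | empty =>
      intro Y _
      simp only [Finset.prod_empty, one_mul]
      rcases Y.eq_empty_or_nonempty with h | h
      · simp [h, hf1]
      · exact hind Y h
    | @insert j X hj ih =>
      intro Y hdisj
      have hjY : j ∉ Y := by
        intro hjy
        exact (Finset.disjoint_left.mp hdisj (Finset.mem_insert_self j X)) hjy
      have hXY : Disjoint X Y :=
        Finset.disjoint_of_subset_left (Finset.subset_insert j X) hdisj
      have hXjY : Disjoint X (insert j Y) := by
        rw [Finset.disjoint_insert_right]
        exact ⟨hj, hXY⟩
      set p := (∏ i ∈ X, c i) * ∏ i ∈ Y, s i with hp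
      have hps : p * s j = (∏ i ∈ X, c i) * ∏ i ∈ insert j Y, s i := by
        rw [Finset.prod_insert hjY]; ring
      have hfps : f (p * s j) = (∏ i ∈ X, (1 - f (s i))) * (f (s j) * ∏ i ∈ Y, f (s i)) := by
        rw [hps, ih (insert j Y) hXjY, Finset.prod_insert hjY]
      have horth : (p * s j) * (p * c j) = 0 := by
        calc (p * s j) * (p * c j) = p * p * (s j * c j) := by ring
        _ = 0 := by rw [hcm j, mul_zero]
      have hsplit : p = p * s j + p * c j := by
        calc p = p * (s j + c j) := by rw [hca j, mul_one]
        _ = p * s j + p * c j := by ring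
      have hfp : f p = f (p * s j) + f (p * c j) := by
        have h := hf (p * s j) (p * c j) horth
        rw [← hsplit] at h
        exact h
      have hfpval : f p = (∏ i ∈ X, (1 - f (s i))) * ∏ i ∈ Y, f (s i) := ih Y hXY
      have hgoal : f (p * c j) = (1 - f (s j)) * ((∏ i ∈ X, (1 - f (s i))) * ∏ i ∈ Y, f (s i)) := by
        have := hfp
        rw [hfpval, hfps] at this
        linear_combination -this
      rw [Finset.prod_insert hj, Finset.prod_insert hj]
      have harg : (c j * ∏ i ∈ X, c i) * ∏ i ∈ Y, s i = p * c j := by rw [hp]; ring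
      rw [harg, hgoal]; ring
  -- Step 4: assemble.
  have horth : (∑ i, s i) * ∏ i, c i = 0 := by
    rw [Finset.sum_mul]
    apply Finset.sum_eq_zero
    intro i _
    rw [← Finset.mul_prod_erase Finset.univ c (Finset.mem_univ i), ← mul_assoc, hcm i, zero_mul]
  have h1 : f 1 = f (∑ i, s i) + f (∏ i, c i) := by
    rw [← hA Finset.univ]
    exact hf _ _ horth
  have hfc : f (∏ i, c i) = ∏ i, (1 - f (s i)) := by
    have := hB Finset.univ ∅ (Finset.disjoint_empty_right _)
    simpa using this
  rw [hf1, hfc] at h1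
  linear_combination -h1
end

section
/- Let S be a pre-semiring with additive neutral element 0 and multiplicative neutral element 1, in which 1 has an additive inverse, and let T be a commutative cancellative monoid. Then every modular function f : S → T is constant. -/
/-- Let `S` be a pre-semiring (two commutative semigroup operations, `·` distributing
over `+`) with additive neutral element `z` and multiplicative neutral element `o`, in
which `o` has an additive inverse `n1`. Let `T` be a commutative cancellative monoid.
Then every modular function `f : S → T` is constant. -/
theorem modular_constant_of_one_has_neg
    {S T : Type*} [Add S] [Mul S] [AddCancelCommMonoid T]
    (addcomm : ∀ a b : S, a + b = b + a)
    (addassoc : ∀ a b c : S, a + b + c = a + (b + c))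
    (mulcomm : ∀ a b : S, a * b = b * a)
    (mulassoc : ∀ a b c : S, a * b * c = a * (b * c))
    (distrib : ∀ a b c : S, a * (b + c) = a * b + a * c)
    (z o n1 : S)
    (hz : ∀ a : S, a + z = a)
    (ho : ∀ a : S, a * o = a)
    (hn1 : o + n1 = z)
    (f : S → T)
    (hf : ∀ a b : S, f (a + b) + f (a * b) = f a + f b) :
    ∀ x y : S, f x = f y := by
  have key : ∀ a : S, f (a + o) = f o := by
    intro a
    have h := hf a o
    rw [ho] at h
    rw [add_comm (f a) (f o)] at h
    exact add_right_cancel h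
  have h2 : ∀ a : S, f a = f o := by
    intro a
    have h := key (a + n1)
    rwa [addassoc, addcomm n1 o, hn1, hz] at h
  intro x y
  rw [h2 x, h2 y]
end

section
/- Let G be an Abelian group and K a linearly ordered positive semifield such that for every y ≥ 1 there exists x ≥ 0 with y = x + 1. Then a function f : K → G is modular (f(x+y) + f(xy) = f(x) + f(y)) if and only if f is constant on the set of positive elements {x ∈ K : x > 0}. -/
/-!
Modularity at `(x, 1)` reads `f (x + 1) + f x = f x + f 1`, so `f` takes the value `f 1` on
every `y ≥ 1`. For `0 < y < 1` modularity at `(y⁻¹, y)` gives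
`f (y⁻¹ + y) + f 1 = f y⁻¹ + f y`, where `y⁻¹` and `y⁻¹ + y` are both `≥ 1`, hence `f y = f 1`.
Conversely, a function constant on the positive elements is modular: if `x` or `y` is `0`
the identity is trivial, and otherwise all four arguments are positive.
-/

def IsModular {K G : Type*} [Add K] [Mul K] [Add G] (f : K → G) : Prop :=
  ∀ x y : K, f (x + y) + f (x * y) = f x + f y

namespace IsModular

variable {K G : Type*} [AddCancelCommMonoid G] {f : K → G}

theorem apply_add_one [Semiring K] (hf : IsModular f) (x : K) : f (x + 1) = f 1 := by
  have h := hf x 1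
  rw [mul_one, add_comm (f x)] at h
  exact add_right_cancel h

theorem apply_eq_apply_one_of_one_le [Semiring K] [LE K] (hf : IsModular f)
    (hsucc : ∀ y : K, 1 ≤ y → ∃ x : K, y = x + 1) {y : K} (hy : 1 ≤ y) : f y = f 1 := by
  obtain ⟨x, rfl⟩ := hsucc y hy
  exact hf.apply_add_one x

theorem apply_eq_apply_one_of_pos [Semifield K] [LinearOrder K] [IsStrictOrderedRing K]
    (hf : IsModular f) (hsucc : ∀ y : K, 1 ≤ y → ∃ x : K, y = x + 1) {y : K} (hy : 0 < y) :
    f y = f 1 := by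
  rcases le_or_gt 1 y with hy1 | hy1
  · exact hf.apply_eq_apply_one_of_one_le hsucc hy1
  have hinv : 1 ≤ y⁻¹ := one_le_inv_iff₀.mpr ⟨hy, hy1.le⟩
  have hsum : 1 ≤ y⁻¹ + y := le_add_of_le_of_nonneg hinv hy.le
  have h := hf y⁻¹ y
  rw [inv_mul_cancel₀ hy.ne', hf.apply_eq_apply_one_of_one_le hsucc hsum,
    hf.apply_eq_apply_one_of_one_le hsucc hinv] at h
  exact (add_left_cancel h).symm

end IsModular

theorem isModular_of_forall_pos_eq {K G : Type*} [AddCommMonoid G] [Semiring K] [PartialOrder K]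
    [IsStrictOrderedRing K] (hpos : ∀ x : K, 0 ≤ x) {f : K → G}
    (hf : ∀ x y : K, 0 < x → 0 < y → f x = f y) : IsModular f := by
  intro x y
  rcases (hpos x).eq_or_lt with rfl | hx
  · rw [zero_add, zero_mul, add_comm]
  rcases (hpos y).eq_or_lt with rfl | hy
  · rw [add_zero, mul_zero]
  rw [hf _ _ (add_pos hx hy) hx, hf _ _ (mul_pos hx hy) hy]

/-- Let `G` be an Abelian group and `K` a linearly ordered positive semifield (all
elements are `≥ 0`) such that every `y ≥ 1` can be written as `x + 1` with `x ≥ 0`.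
Then `f : K → G` is modular iff `f` is constant on the set of positive elements. -/
theorem semifield_modular_iff_constant_on_pos
    {G K : Type*} [AddCommGroup G] [Semifield K] [LinearOrder K] [IsStrictOrderedRing K]
    (hpos : ∀ x : K, 0 ≤ x)
    (hsucc : ∀ y : K, 1 ≤ y → ∃ x : K, 0 ≤ x ∧ y = x + 1)
    (f : K → G) :
    (∀ x y : K, f (x + y) + f (x * y) = f x + f y) ↔
      (∀ x y : K, 0 < x → 0 < y → f x = f y) := by
  have hsucc' : ∀ y : K, 1 ≤ y → ∃ x : K, y = x + 1 := fun y hy =>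
    (hsucc y hy).imp fun _ => And.right
  refine ⟨fun hf x y hx hy => ?_, isModular_of_forall_pos_eq hpos⟩
  rw [IsModular.apply_eq_apply_one_of_pos hf hsucc' hx,
    IsModular.apply_eq_apply_one_of_pos hf hsucc' hy]
end

section
/- Let S be a simple semiring (s + 1 = 1 for all s ∈ S), G an Abelian group, and f : S → G a modular function. Then f(xᵐyⁿ) = f(xy) for all x, y ∈ S and positive integers m, n. -/
/-- Let `S` be a simple commutative semiring (`s + 1 = 1` for all `s`), `G` an Abelian
group, and `f : S → G` a modular function. Then `f (xᵐ yⁿ) = f (x y)` for all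
`x, y ∈ S` and positive integers `m, n`. -/
theorem simple_semiring_modular_pow
    {S G : Type*} [CommSemiring S] [AddCommGroup G]
    (hsimple : ∀ s : S, s + 1 = 1)
    (f : S → G)
    (hf : ∀ a b : S, f (a + b) + f (a * b) = f a + f b)
    (x y : S) (m n : ℕ) (hm : 0 < m) (hn : 0 < n) :
    f (x ^ m * y ^ n) = f (x * y) := by
  have key : ∀ a b : S, f (a * (a * b)) = f (a * b) := by
    intro a b
    have h := hf a (a * b)
    have habs : a + a * b = a := by
      calc a + a * b = a * (b + 1) := by ring
        _ = a := by rw [hsimple b, mul_one]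
    rw [habs] at h
    exact add_left_cancel h
  have key' : ∀ (a b : S) (k : ℕ), 0 < k → f (a ^ k * b) = f (a * b) := by
    intro a b k hk
    induction k, hk using Nat.le_induction with
    | base => rw [pow_one]
    | succ k hk ih =>
      obtain ⟨j, rfl⟩ : ∃ j, k = j + 1 := ⟨k - 1, (Nat.succ_pred_eq_of_pos hk).symm⟩
      have e1 : a ^ (j + 1 + 1) * b = a * (a * (a ^ j * b)) := by ring
      have e2 : a ^ (j + 1) * b = a * (a ^ j * b) := by ring
      rw [e1, key, ← e2, ih]
  calc f (x ^ m * y ^ n) = f (x * y ^ n) := key' x (y ^ n) m hm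
    _ = f (y ^ n * x) := by rw [mul_comm]
    _ = f (y * x) := key' y x n hn
    _ = f (x * y) := by rw [mul_comm]
end

section
/- (Inclusion-Exclusion for modular functions) Let S be a multiplicatively idempotent pre-semiring, T a commutative semigroup, and m : S → T a modular function. Then for any s₁, ..., sₙ ∈ S: m(∑ᵢ sᵢ) + ∑_{i<j} m(sᵢsⱼ) + ∑_{i<j<k<l} m(sᵢsⱼs_k s_l) + ⋯ = ∑ᵢ m(sᵢ) + ∑_{i<j<k} m(sᵢsⱼs_k) + ⋯, i.e., m(∑ᵢ sᵢ) plus the sums of m over products of even-sized subsets equals the sums of m over products of odd-sized nonempty subsets. -/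
section Aux

open Finset

private theorem powerset_map' {α β : Type*} (s : Finset α) (f : α ↪ β) :
    (s.map f).powerset = s.powerset.map (Finset.mapEmbedding f).toEmbedding := by
  ext t
  simp only [Finset.mem_powerset, Finset.mem_map, RelEmbedding.coe_toEmbedding,
    Finset.mapEmbedding_apply]
  constructor
  · intro ht
    classical
    refine ⟨s.filter (fun a => f a ∈ t), Finset.filter_subset _ _, ?_⟩
    ext b
    simp only [Finset.mem_map, Finset.mem_filter]
    constructor
    · rintro ⟨a, ⟨-, h⟩, rfl⟩; exact h
    · intro hb
      obtain ⟨a, ha, rfl⟩ := Finset.mem_map.mp (ht hb)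
      exact ⟨a, ⟨ha, hb⟩, rfl⟩
  · rintro ⟨u, hu, rfl⟩; exact Finset.map_subset_map.mpr hu

variable {S T : Type*} [SemilatticeInf S] [Add S] [AddCommSemigroup T]

/-- `m` of the inf over a nonempty subset, or `0` for the empty set. -/
private def modG (m : S → T) {N : ℕ} (s : Fin N → S) (X : Finset (Fin N)) : WithZero T :=
  if h : X.Nonempty then (↑(m (X.inf' h s)) : WithZero T) else 0

private theorem inf'_inf_const {ι : Type*} (Y : Finset ι) (h : Y.Nonempty) (f : ι → S) (c : S) :
    Y.inf' h f ⊓ c = Y.inf' h (fun i => f i ⊓ c) := by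
  apply le_antisymm
  · refine Finset.le_inf' h _ fun i hi => ?_
    exact inf_le_inf_right c (Finset.inf'_le f hi)
  · obtain ⟨j, hj⟩ := id h
    refine le_inf ?_ ?_
    · refine Finset.le_inf' h _ fun i hi => ?_
      exact le_trans (Finset.inf'_le _ hi) inf_le_left
    · exact le_trans (Finset.inf'_le _ hj) inf_le_right

private theorem foldl_inf (distrib : ∀ a b c : S, a ⊓ (b + c) = a ⊓ b + a ⊓ c) :
    ∀ (l : List S) (a c : S),
      (l.map (fun x => x ⊓ c)).foldl (· + ·) (a ⊓ c) = (l.foldl (· + ·) a) ⊓ c := by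
  intro l
  induction l with
  | nil => intro a c; rfl
  | cons x l ih =>
    intro a c
    simp only [List.map_cons, List.foldl_cons]
    have : a ⊓ c + x ⊓ c = (a + x) ⊓ c := by
      rw [inf_comm a c, inf_comm x c, ← distrib, inf_comm]
    rw [this, ih]

private theorem modG_key
    (addcomm : ∀ a b : S, a + b = b + a)
    (addassoc : ∀ a b c : S, a + b + c = a + (b + c))
    (distrib : ∀ a b c : S, a ⊓ (b + c) = a ⊓ b + a ⊓ c)
    (m : S → T)
    (hm : ∀ x y : S, m (x + y) + m (x ⊓ y) = m x + m y) :
    ∀ (n : ℕ) (s : Fin (n + 1) → S),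
      (↑(m ((List.ofFn fun i : Fin n => s i.succ).foldl (· + ·) (s 0))) : WithZero T)
          + ∑ X : Finset (Fin (n + 1)), (if Even X.card then modG m s X else 0)
        = ∑ X : Finset (Fin (n + 1)), (if Odd X.card then modG m s X else 0) := by
  intro n
  induction n with
  | zero =>
    intro s
    have huniv : (Finset.univ : Finset (Finset (Fin 1))) = {∅, {0}} := by decide
    rw [huniv]
    rw [Finset.sum_pair (by decide), Finset.sum_pair (by decide)]
    simp [modG, Finset.inf'_singleton]
  | succ n ih =>
    intro s
    set e : Fin (n + 1) ↪ Fin (n + 2) := Fin.castSuccEmb with he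
    set t : Fin (n + 1) → S := fun i => s i.castSucc with ht
    set b : S := s (Fin.last (n + 1)) with hb
    set u : Fin (n + 1) → S := fun i => t i ⊓ b with hu
    set A : S := (List.ofFn fun i : Fin n => t i.succ).foldl (· + ·) (t 0) with hA
    -- sum decomposition
    have hsum : (List.ofFn fun i : Fin (n + 1) => s i.succ).foldl (· + ·) (s 0) = A + b := by
      rw [List.ofFn_succ' (fun i : Fin (n + 1) => s i.succ)]
      simp only [List.concat_eq_append, List.foldl_append, List.foldl_cons, List.foldl_nil]
      have h1 : (fun i : Fin n => s i.castSucc.succ) = fun i : Fin n => t i.succ := by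
        funext i; rw [Fin.succ_castSucc]
      have h0 : t 0 = s 0 := by
        show s ((0 : Fin (n + 1)).castSucc) = s 0
        rw [Fin.castSucc_zero]
      rw [h1, Fin.succ_last, hA, h0]
    have hsumu : (List.ofFn fun i : Fin n => u i.succ).foldl (· + ·) (u 0) = A ⊓ b := by
      have h1 : (List.ofFn fun i : Fin n => u i.succ)
          = (List.ofFn fun i : Fin n => t i.succ).map (fun x => x ⊓ b) := by
        rw [List.map_ofFn]; rfl
      rw [h1, hu]
      exact foldl_inf distrib _ _ _
    -- facts about last and map
    have hlast : ∀ Y : Finset (Fin (n + 1)), Fin.last (n + 1) ∉ Y.map e := by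
      intro Y hmem
      obtain ⟨y, -, hy⟩ := Finset.mem_map.mp hmem
      exact (Fin.castSucc_lt_last y).ne hy
    have hcard : ∀ Y : Finset (Fin (n + 1)),
        (insert (Fin.last (n + 1)) (Y.map e)).card = Y.card + 1 := by
      intro Y
      rw [Finset.card_insert_of_notMem (hlast Y), Finset.card_map]
    -- splitting a sum over subsets of Fin (n+2)
    have hsplit : ∀ f : Finset (Fin (n + 2)) → WithZero T,
        ∑ X : Finset (Fin (n + 2)), f X
          = ∑ Y : Finset (Fin (n + 1)), f (Y.map e)
            + ∑ Y : Finset (Fin (n + 1)), f (insert (Fin.last (n + 1)) (Y.map e)) := by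
      intro f
      have huniv : (Finset.univ : Finset (Fin (n + 2)))
          = insert (Fin.last (n + 1)) (Finset.univ.map e) := by
        ext x
        simp only [Finset.mem_univ, Finset.mem_insert, Finset.mem_map, true_iff]
        rcases Fin.eq_castSucc_or_eq_last x with ⟨y, rfl⟩ | rfl
        · exact Or.inr ⟨y, trivial, rfl⟩
        · exact Or.inl rfl
      calc ∑ X : Finset (Fin (n + 2)), f X
          = ∑ X ∈ (Finset.univ : Finset (Fin (n + 2))).powerset, f X := by
            rw [Finset.powerset_univ]
        _ = ∑ X ∈ (Finset.univ.map e).powerset, f X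
            + ∑ X ∈ (Finset.univ.map e).powerset, f (insert (Fin.last (n + 1)) X) := by
            rw [huniv, Finset.sum_powerset_insert (hlast Finset.univ)]
        _ = _ := by
            rw [powerset_map', Finset.sum_map, Finset.sum_map]
            simp only [RelEmbedding.coe_toEmbedding, Finset.mapEmbedding_apply,
              Finset.powerset_univ]
    -- modG transfers
    have hGmap : ∀ Y : Finset (Fin (n + 1)), modG m s (Y.map e) = modG m t Y := by
      intro Y
      by_cases hY : Y.Nonempty
      · rw [modG, modG, dif_pos (Finset.map_nonempty.mpr hY), dif_pos hY, Finset.inf'_map]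
        have hse : s ∘ ⇑e = t := by
          funext i
          rw [he, ht]
          simp [Fin.coe_castSuccEmb]
        rw [hse]
      · rw [modG, modG, dif_neg (fun h => hY (Finset.map_nonempty.mp h)), dif_neg hY]
    have hGins : ∀ Y : Finset (Fin (n + 1)), Y.Nonempty →
        modG m s (insert (Fin.last (n + 1)) (Y.map e)) = modG m u Y := by
      intro Y hY
      rw [modG, modG, dif_pos (Finset.insert_nonempty _ _), dif_pos hY]
      rw [Finset.inf'_insert (Finset.map_nonempty.mpr hY), Finset.inf'_map, inf_comm,
        inf'_inf_const Y hY (s ∘ ⇑e) (s (Fin.last (n + 1)))]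
      have hfun : (fun i => (s ∘ ⇑e) i ⊓ s (Fin.last (n + 1))) = u := by
        funext i
        rw [hu, ht, hb, he]
        simp [Fin.coe_castSuccEmb]
      rw [hfun]
    have hGsing : modG m s {Fin.last (n + 1)} = (↑(m b) : WithZero T) := by
      rw [modG, dif_pos (Finset.singleton_nonempty _), Finset.inf'_singleton]
    -- rewrite the four partial sums
    have hEvenMap : ∑ Y : Finset (Fin (n + 1)),
        (if Even (Y.map e).card then modG m s (Y.map e) else 0)
        = ∑ Y : Finset (Fin (n + 1)), (if Even Y.card then modG m t Y else 0) :=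
      Finset.sum_congr rfl fun Y _ => by rw [Finset.card_map, hGmap]
    have hOddMap : ∑ Y : Finset (Fin (n + 1)),
        (if Odd (Y.map e).card then modG m s (Y.map e) else 0)
        = ∑ Y : Finset (Fin (n + 1)), (if Odd Y.card then modG m t Y else 0) :=
      Finset.sum_congr rfl fun Y _ => by rw [Finset.card_map, hGmap]
    have hEvenIns : ∑ Y : Finset (Fin (n + 1)),
        (if Even (insert (Fin.last (n + 1)) (Y.map e)).card
          then modG m s (insert (Fin.last (n + 1)) (Y.map e)) else 0)
        = ∑ Y : Finset (Fin (n + 1)), (if Odd Y.card then modG m u Y else 0) := by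
      refine Finset.sum_congr rfl fun Y _ => ?_
      rw [hcard Y]
      by_cases hY : Y.Nonempty
      · simp [hGins Y hY, Nat.even_add_one, Nat.not_even_iff_odd]
      · rw [Finset.not_nonempty_iff_eq_empty.mp hY]
        simp [modG]
    have hOddIns : ∑ Y : Finset (Fin (n + 1)),
        (if Odd (insert (Fin.last (n + 1)) (Y.map e)).card
          then modG m s (insert (Fin.last (n + 1)) (Y.map e)) else 0)
        = (↑(m b) : WithZero T)
          + ∑ Y : Finset (Fin (n + 1)), (if Even Y.card then modG m u Y else 0) := by
      have : ∀ Y : Finset (Fin (n + 1)),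
          (if Odd (insert (Fin.last (n + 1)) (Y.map e)).card
            then modG m s (insert (Fin.last (n + 1)) (Y.map e)) else 0)
          = (if (∅ : Finset (Fin (n + 1))) = Y then (↑(m b) : WithZero T) else 0)
            + (if Even Y.card then modG m u Y else 0) := by
        intro Y
        rw [hcard Y]
        by_cases hY : Y.Nonempty
        · have hne : ¬((∅ : Finset (Fin (n + 1))) = Y) := fun h => by
            rw [← h] at hY
            exact Finset.not_nonempty_empty hY
          rw [if_neg hne, zero_add, hGins Y hY]
          simp [Nat.odd_add_one, Nat.not_odd_iff_even]
        · rw [Finset.not_nonempty_iff_eq_empty.mp hY]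
          have hmu : modG m u (∅ : Finset (Fin (n + 1))) = 0 := by
            rw [modG, dif_neg Finset.not_nonempty_empty]
          simp [hGsing, hmu, Nat.odd_add_one]
      rw [Finset.sum_congr rfl fun Y _ => this Y, Finset.sum_add_distrib,
        Finset.sum_ite_eq Finset.univ (∅ : Finset (Fin (n + 1)))
          (fun _ => (↑(m b) : WithZero T)), if_pos (Finset.mem_univ _)]
    -- main computation
    rw [hsum, hsplit (fun X => if Even X.card then modG m s X else 0),
      hsplit (fun X => if Odd X.card then modG m s X else 0)]
    simp only [hEvenMap, hOddMap, hEvenIns, hOddIns]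
    have iht := ih t
    have ihu := ih u
    rw [hsumu] at ihu
    have hAB : (↑(m (A + b)) : WithZero T) + ↑(m (A ⊓ b)) = ↑(m A) + ↑(m b) := by
      rw [← WithZero.coe_add, ← WithZero.coe_add, hm]
    calc (↑(m (A + b)) : WithZero T)
        + (∑ Y : Finset (Fin (n + 1)), (if Even Y.card then modG m t Y else 0)
          + ∑ Y : Finset (Fin (n + 1)), (if Odd Y.card then modG m u Y else 0))
        = (↑(m (A + b)) : WithZero T)
          + (∑ Y : Finset (Fin (n + 1)), (if Even Y.card then modG m t Y else 0)
            + ((↑(m (A ⊓ b)) : WithZero T)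
              + ∑ Y : Finset (Fin (n + 1)), (if Even Y.card then modG m u Y else 0))) := by
          rw [ihu]
      _ = ((↑(m (A + b)) : WithZero T) + (↑(m (A ⊓ b)) : WithZero T))
          + (∑ Y : Finset (Fin (n + 1)), (if Even Y.card then modG m t Y else 0)
            + ∑ Y : Finset (Fin (n + 1)), (if Even Y.card then modG m u Y else 0)) := by
          abel
      _ = ((↑(m A) : WithZero T) + (↑(m b) : WithZero T))
          + (∑ Y : Finset (Fin (n + 1)), (if Even Y.card then modG m t Y else 0)
            + ∑ Y : Finset (Fin (n + 1)), (if Even Y.card then modG m u Y else 0)) := by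
          rw [hAB]
      _ = ((↑(m A) : WithZero T)
            + ∑ Y : Finset (Fin (n + 1)), (if Even Y.card then modG m t Y else 0))
          + ((↑(m b) : WithZero T)
            + ∑ Y : Finset (Fin (n + 1)), (if Even Y.card then modG m u Y else 0)) := by
          abel
      _ = ∑ Y : Finset (Fin (n + 1)), (if Odd Y.card then modG m t Y else 0)
          + ((↑(m b) : WithZero T)
            + ∑ Y : Finset (Fin (n + 1)), (if Even Y.card then modG m u Y else 0)) := by
          rw [iht]

end Aux

/-- (Inclusion-Exclusion for modular functions) Let `S` be a multiplicatively idempotent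
pre-semiring: since an idempotent commutative multiplicative semigroup is exactly a
meet-semilattice, `S` carries a `SemilatticeInf` structure (the multiplication is `⊓`)
together with a commutative, associative addition over which `⊓` distributes.
Let `T` be a commutative semigroup and `m : S → T` a modular function
(`m (x + y) + m (x ⊓ y) = m x + m y`). Then for `s 0, …, s n`:
`m (∑ᵢ s i)` plus the sum of `m` over products of even-sized subsets equals the sum of
`m` over products of odd-sized (nonempty) subsets. Since `T` has no neutral element, the
sum in `S` is a fold and the sums in `T` are computed in the monoid completion
`WithZero T`. -/
theorem inclusion_exclusion_modular
    {S T : Type*} [SemilatticeInf S] [Add S] [AddCommSemigroup T]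
    (addcomm : ∀ a b : S, a + b = b + a)
    (addassoc : ∀ a b c : S, a + b + c = a + (b + c))
    (distrib : ∀ a b c : S, a ⊓ (b + c) = a ⊓ b + a ⊓ c)
    (m : S → T)
    (hm : ∀ x y : S, m (x + y) + m (x ⊓ y) = m x + m y)
    (n : ℕ) (s : Fin (n + 1) → S) :
    (↑(m ((List.ofFn fun i : Fin n => s i.succ).foldl (· + ·) (s 0))) +
        ∑ X ∈ ((Finset.univ : Finset (Fin (n + 1))).powerset.filter
            (fun X => 0 < X.card ∧ Even X.card)).attach,
          (↑(m (X.1.inf' (Finset.card_pos.mp (Finset.mem_filter.mp X.2).2.1) s)) :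
            WithZero T) : WithZero T) =
      ∑ X ∈ ((Finset.univ : Finset (Fin (n + 1))).powerset.filter
          (fun X => 0 < X.card ∧ Odd X.card)).attach,
        (↑(m (X.1.inf' (Finset.card_pos.mp (Finset.mem_filter.mp X.2).2.1) s)) :
          WithZero T) := by
  have key := modG_key addcomm addassoc distrib m hm n s
  have conv1 : ∀ (p : ℕ → Prop) [DecidablePred p],
      ∑ X ∈ ((Finset.univ : Finset (Fin (n + 1))).powerset.filter
          (fun X => 0 < X.card ∧ p X.card)).attach,
        (↑(m (X.1.inf' (Finset.card_pos.mp (Finset.mem_filter.mp X.2).2.1) s)) : WithZero T)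
      = ∑ X : Finset (Fin (n + 1)), (if p X.card then modG m s X else 0) := by
    intro p _
    have step1 : ∑ X ∈ ((Finset.univ : Finset (Fin (n + 1))).powerset.filter
          (fun X => 0 < X.card ∧ p X.card)).attach,
        (↑(m (X.1.inf' (Finset.card_pos.mp (Finset.mem_filter.mp X.2).2.1) s)) : WithZero T)
        = ∑ X ∈ ((Finset.univ : Finset (Fin (n + 1))).powerset.filter
            (fun X => 0 < X.card ∧ p X.card)).attach, modG m s X.1 := by
      refine Finset.sum_congr rfl fun X _ => ?_
      rw [modG, dif_pos (Finset.card_pos.mp (Finset.mem_filter.mp X.2).2.1)]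
    rw [step1, Finset.sum_attach, Finset.sum_filter, Finset.powerset_univ]
    refine Finset.sum_congr rfl fun X _ => ?_
    by_cases hX : X.Nonempty
    · simp [Finset.card_pos.mpr hX]
    · have : modG m s X = 0 := by rw [modG, dif_neg hX]
      simp [this]
  rw [conv1 Even, conv1 Odd]
  exact key
end
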